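/- Strict positive definiteness of the Hessian: let u be a random nonnegative vector in R^{N+1} (N ≥ q) with P(u_0 > 0) = 1 and E u_j^2 < ∞ for all j, and h* ∈ R_{≥0}^{q+1}. The matrix H(h) ∈ R^{(q+1)×(q+1)} with entries H(h)_{kl} = E Σ_{j=0}^N ((T(h*)u)_j/(T(h)u)_j^2) u_{j-k} u_{j-l} is strictly positive definite for every h at which all expectations are finite and the denominators a.s. positive, provided h* has at least one strictly positive component h*_p for each p ∈ {0,...,q} (e.g., h* strictly positive). -/

import Mathlib

open scoped BigOperators
open MeasureTheory

/-- The convolution `(T(h)u)_i = ∑_{k=0}^{min(i,q)} h_k u_{i-k}`. -/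
def conv (q N : ℕ) (h : Fin (q + 1) → ℝ) (u : Fin (N + 1) → ℝ) : Fin (N + 1) → ℝ :=
  fun i => ∑ k : Fin (q + 1),
    if (k : ℕ) ≤ (i : ℕ) then
      h k * u ⟨(i : ℕ) - (k : ℕ), Nat.lt_of_le_of_lt (Nat.sub_le _ _) i.isLt⟩
    else 0

/-- `u_{j-k}` with the convention `u_i = 0` for `i < 0`. -/
def shift (q N : ℕ) (u : Fin (N + 1) → ℝ) (j : Fin (N + 1)) (k : Fin (q + 1)) : ℝ :=
  if (k : ℕ) ≤ (j : ℕ) then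
    u ⟨(j : ℕ) - (k : ℕ), Nat.lt_of_le_of_lt (Nat.sub_le _ _) j.isLt⟩
  else 0

/-!
Each integrand is a weighted Gram matrix `∑ⱼ cⱼ sⱼ sⱼᵀ` with rows `sⱼ = (u_{j-k})ₖ` and weights
`cⱼ = (T(h*)u)ⱼ / (T(h)u)ⱼ² ≥ 0`, so `xᵀ H(h) x = E ∑ⱼ cⱼ (sⱼ · x)²`. For `x ≠ 0` let `p` be its
first nonzero coordinate: the rows `s₀, …, s_q` form a lower triangular matrix with diagonal `u₀`,
so `s_p · x = x_p u₀ ≠ 0`, while `c_p > 0` because `(T(h*)u)_p ≥ h*_p u₀ > 0`. Hence the integrand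
is almost surely positive and so is its expectation.
-/

namespace Matrix

variable {m n : Type*} [Fintype m]

theorem isSymm_weightedGram (c : m → ℝ) (s : m → n → ℝ) :
    (of fun k l => ∑ j, c j * s j k * s j l).IsSymm :=
  IsSymm.ext fun k l => Finset.sum_congr rfl fun j _ => by ring

theorem dotProduct_mulVec_weightedGram [Fintype n] (c : m → ℝ) (s : m → n → ℝ) (x : n → ℝ) :
    x ⬝ᵥ (of fun k l => ∑ j, c j * s j k * s j l) *ᵥ x = ∑ j, c j * (x ⬝ᵥ s j) ^ 2 := by
  simp only [dotProduct, mulVec, of_apply, sq, Finset.mul_sum, Finset.sum_mul]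
  calc _ = ∑ k, ∑ j, ∑ l, x k * (c j * s j k * s j l * x l) :=
        Finset.sum_congr rfl fun k _ => Finset.sum_comm
    _ = _ := Finset.sum_comm.trans <| Finset.sum_congr rfl fun j _ =>
        Finset.sum_congr rfl fun k _ => Finset.sum_congr rfl fun l _ => by ring

theorem integral_dotProduct_mulVec [Fintype n] {Ω : Type*} [MeasurableSpace Ω] {μ : Measure Ω}
    {G : Ω → n → n → ℝ} (hG : ∀ k l, Integrable (fun ω => G ω k l) μ) (x : n → ℝ) :
    x ⬝ᵥ (of fun k l => ∫ ω, G ω k l ∂μ) *ᵥ x = ∫ ω, x ⬝ᵥ of (G ω) *ᵥ x ∂μ := by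
  simp only [dotProduct, mulVec, of_apply, Finset.mul_sum]
  rw [integral_finsetSum _ fun k _ =>
    integrable_finsetSum _ fun l _ => ((hG k l).mul_const _).const_mul _]
  refine Finset.sum_congr rfl fun k _ => ?_
  rw [integral_finsetSum _ fun l _ => ((hG k l).mul_const _).const_mul _]
  refine Finset.sum_congr rfl fun l _ => ?_
  rw [integral_const_mul, integral_mul_const]

theorem posDef_of_integral [Fintype n] {Ω : Type*} [MeasurableSpace Ω] {μ : Measure Ω} [NeZero μ]
    {G : Ω → n → n → ℝ} (hG : ∀ k l, Integrable (fun ω => G ω k l) μ)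
    (hsymm : ∀ᵐ ω ∂μ, (of (G ω)).IsSymm) (hpos : ∀ x ≠ 0, ∀ᵐ ω ∂μ, 0 < x ⬝ᵥ of (G ω) *ᵥ x) :
    (of fun k l => ∫ ω, G ω k l ∂μ).PosDef := by
  refine posDef_iff_dotProduct_mulVec.mpr ⟨?_, fun x hx => ?_⟩
  · ext k l
    exact integral_congr_ae (hsymm.mono fun ω h => congrFun (congrFun h k) l)
  · have hint : Integrable (fun ω => x ⬝ᵥ G ω *ᵥ x) μ := by
      simp only [dotProduct, mulVec]
      exact integrable_finsetSum _ fun k _ =>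
        (integrable_finsetSum _ fun l _ => (hG k l).mul_const _).const_mul _
    rw [star_trivial, integral_dotProduct_mulVec hG, integral_pos_iff_support_of_nonneg_ae
      ((hpos x hx).mono fun ω h => h.le) hint, measure_congr (ae_eq_univ.mpr ?_)]
    · exact Measure.measure_univ_pos.mpr (NeZero.ne μ)
    · exact measure_mono_null (fun ω h => by simp_all) (ae_iff.mp (hpos x hx))

end Matrix

section Shift

variable {q N : ℕ} (u : Fin (N + 1) → ℝ) {j : Fin (N + 1)} {k : Fin (q + 1)}

theorem shift_of_lt (h : (j : ℕ) < k) : shift q N u j k = 0 :=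
  if_neg (by omega)

theorem shift_of_val_eq (h : (j : ℕ) = k) : shift q N u j k = u 0 := by
  simp [shift, h]

theorem shift_nonneg (hu : ∀ i, 0 ≤ u i) : 0 ≤ shift q N u j k := by
  unfold shift
  split_ifs
  exacts [hu _, le_rfl]

theorem conv_eq_sum_shift (h : Fin (q + 1) → ℝ) :
    conv q N h u j = ∑ k, h k * shift q N u j k := by
  simp only [conv, shift, mul_ite, mul_zero]

theorem conv_nonneg {h : Fin (q + 1) → ℝ} (hh : ∀ k, 0 ≤ h k) (hu : ∀ i, 0 ≤ u i) :
    0 ≤ conv q N h u j := by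
  rw [conv_eq_sum_shift]
  exact Finset.sum_nonneg fun k _ => mul_nonneg (hh k) (shift_nonneg u hu)

theorem conv_pos {h : Fin (q + 1) → ℝ} (hh : ∀ k, 0 < h k) (hu : ∀ i, 0 ≤ u i) (hu0 : 0 < u 0)
    (hj : (j : ℕ) ≤ q) : 0 < conv q N h u j := by
  rw [conv_eq_sum_shift]
  refine Finset.sum_pos' (fun k _ => mul_nonneg (hh k).le (shift_nonneg u hu))
    ⟨⟨j, by omega⟩, Finset.mem_univ _, ?_⟩
  rw [shift_of_val_eq (q := q) u rfl]
  exact mul_pos (hh _) hu0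

theorem exists_dotProduct_shift_ne_zero (hqN : q ≤ N) (hu0 : u 0 ≠ 0) {x : Fin (q + 1) → ℝ}
    (hx : x ≠ 0) : ∃ j : Fin (N + 1), (j : ℕ) ≤ q ∧ x ⬝ᵥ shift q N u j ≠ 0 := by
  obtain ⟨p, hp, hmin⟩ := (Finset.univ.filter (x · ≠ 0)).exists_min_image id
    (by simpa [Finset.filter_nonempty_iff, Function.ne_iff] using hx)
  rw [Finset.mem_filter] at hp
  refine ⟨⟨p, by omega⟩, Nat.lt_succ_iff.mp p.isLt, ?_⟩
  rw [dotProduct, Finset.sum_eq_single p]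
  · rw [shift_of_val_eq (q := q) u rfl]
    exact mul_ne_zero hp.2 hu0
  · intro k _ hkp
    rcases lt_or_gt_of_ne hkp with hk | hk
    · have hxk : x k = 0 := not_not.mp fun hxk => (hmin k (by simpa using hxk)).not_gt hk
      rw [hxk, zero_mul]
    · rw [shift_of_lt u hk, mul_zero]
  · simp

end Shift

theorem hessian_posDef_general
    {Ω : Type*} [MeasurableSpace Ω] (μ : Measure Ω) [IsProbabilityMeasure μ]
    (q N : ℕ) (hqN : q ≤ N)
    (u : Ω → Fin (N + 1) → ℝ)
    (hu_nonneg : ∀ᵐ ω ∂μ, ∀ i, 0 ≤ u ω i)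
    (hu0 : ∀ᵐ ω ∂μ, 0 < u ω 0)
    (hstar h : Fin (q + 1) → ℝ)
    (hstar_pos : ∀ p, 0 < hstar p)
    (hden : ∀ᵐ ω ∂μ, ∀ j : Fin (N + 1), 0 < conv q N h (u ω) j)
    (hint : ∀ k l : Fin (q + 1), Integrable (fun ω =>
      ∑ j : Fin (N + 1), (conv q N hstar (u ω) j / (conv q N h (u ω) j) ^ 2)
        * shift q N (u ω) j k * shift q N (u ω) j l) μ) :
    (Matrix.of fun k l : Fin (q + 1) =>
      ∫ ω, ∑ j : Fin (N + 1), (conv q N hstar (u ω) j / (conv q N h (u ω) j) ^ 2)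
        * shift q N (u ω) j k * shift q N (u ω) j l ∂μ).PosDef := by
  refine Matrix.posDef_of_integral hint
    (ae_of_all _ fun ω => Matrix.isSymm_weightedGram _ _) fun x hx => ?_
  filter_upwards [hu_nonneg, hu0, hden] with ω hnn h0 hd
  rw [Matrix.dotProduct_mulVec_weightedGram]
  obtain ⟨j, hjq, hj⟩ := exists_dotProduct_shift_ne_zero (u ω) hqN h0.ne' hx
  have hweight_nonneg : ∀ i, 0 ≤ conv q N hstar (u ω) i / conv q N h (u ω) i ^ 2 := fun i =>
    div_nonneg (conv_nonneg (u ω) (fun k => (hstar_pos k).le) hnn) (sq_nonneg _)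
  have hweight_pos : 0 < conv q N hstar (u ω) j / conv q N h (u ω) j ^ 2 :=
    div_pos (conv_pos (u ω) hstar_pos hnn h0 hjq) (pow_pos (hd j) 2)
  exact Finset.sum_pos' (fun i _ => mul_nonneg (hweight_nonneg i) (sq_nonneg _))
    ⟨j, Finset.mem_univ _, mul_pos hweight_pos (sq_pos_of_ne_zero hj)⟩

/-- strict positive definiteness of the Hessian
`H(h)_{kl} = E ∑_{j=0}^N ((T(h*)u)_j/(T(h)u)_j²) u_{j-k} u_{j-l}` of the limit
criterion, when `P(u₀ > 0) = 1`, `E u_j² < ∞`, `h*` is strictly positive, and the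
denominators are a.s. positive with all expectations finite. -/
theorem hessian_posDef
    {Ω : Type*} [MeasurableSpace Ω] (μ : Measure Ω) [IsProbabilityMeasure μ]
    (q N : ℕ) (hqN : q ≤ N)
    (u : Ω → Fin (N + 1) → ℝ) (hu_meas : Measurable u)
    (hu_nonneg : ∀ᵐ ω ∂μ, ∀ i, 0 ≤ u ω i)
    (hu0 : ∀ᵐ ω ∂μ, 0 < u ω 0)
    (hu_sq : ∀ j : Fin (N + 1), Integrable (fun ω => (u ω j) ^ 2) μ)
    (hstar h : Fin (q + 1) → ℝ)
    (hstar_pos : ∀ p, 0 < hstar p) (h_nonneg : ∀ k, 0 ≤ h k)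
    (hden : ∀ᵐ ω ∂μ, ∀ j : Fin (N + 1), 0 < conv q N h (u ω) j)
    (hint : ∀ k l : Fin (q + 1), Integrable (fun ω =>
      ∑ j : Fin (N + 1), (conv q N hstar (u ω) j / (conv q N h (u ω) j) ^ 2)
        * shift q N (u ω) j k * shift q N (u ω) j l) μ) :
    (Matrix.of fun k l : Fin (q + 1) =>
      ∫ ω, ∑ j : Fin (N + 1), (conv q N hstar (u ω) j / (conv q N h (u ω) j) ^ 2)
        * shift q N (u ω) j k * shift q N (u ω) j l ∂μ).PosDef :=
  hessian_posDef_general μ q N hqN u hu_nonneg hu0 hstar h hstar_pos hden hint
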